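/- The function u₂(x) = (1+√2)^{−2} e^{−√2 x} [ −sech² x, (tanh x + √2)² ]ᵀ satisfies H₀ u₂ = u₂, where H₀ = diag(−∂ₓ²+1, ∂ₓ²−1) + sech²x · [[−4,−2],[2,4]]. Moreover e^{√2 x} u₂(x) → (1+√2)^{−2}[0, (√2−1)²]ᵀ as x → −∞, so u₂ is unbounded on ℝ. -/

import Mathlib

/-!
Write `t = tanh x`, `q = sech x`, so that `t' = q²`, `q' = -t q` and `q² + t² = 1`. Both
components of `u₂` are `a e^{-s x}` times a polynomial in `t` and `q`, hence so are their second
derivatives, and the two equations of `H₀u₂ = u₂` reduce to the polynomial identities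
`q² (2 - s²) = 0` (which needs `q² + t² = 1`) and `(s² - 2) (t + s)² = 0`, true for `s = √2`.
As `x → −∞`, `t → −1` and `q → 0`; the limit of `e^{√2 x} u₂` has nonzero second component,
so `u₂` itself cannot stay bounded.
-/

open Filter Topology Real

namespace Real

lemma sech_sq_add_tanh_sq (x : ℝ) : (1 / cosh x) ^ 2 + tanh x ^ 2 = 1 := by
  have hc : cosh x ≠ 0 := (cosh_pos x).ne'
  rw [tanh_eq_sinh_div_cosh]
  field_simp
  linear_combination -cosh_sq x

lemma hasDerivAt_tanh (x : ℝ) : HasDerivAt tanh ((1 / cosh x) ^ 2) x := by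
  have hc : cosh x ≠ 0 := (cosh_pos x).ne'
  have htanh : tanh = fun y => sinh y / cosh y := funext tanh_eq_sinh_div_cosh
  rw [htanh]
  refine ((hasDerivAt_sinh x).div (hasDerivAt_cosh x) hc).congr_deriv ?_
  field_simp
  linear_combination cosh_sq x

lemma hasDerivAt_sech (x : ℝ) :
    HasDerivAt (fun y => 1 / cosh y) (-(tanh x * (1 / cosh x))) x := by
  have hc : cosh x ≠ 0 := (cosh_pos x).ne'
  refine ((hasDerivAt_const x 1).div (hasDerivAt_cosh x) hc).congr_deriv ?_
  rw [tanh_eq_sinh_div_cosh]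
  field_simp
  ring

lemma tendsto_cosh_atBot : Tendsto cosh atBot atTop := by
  have hexp : Tendsto (fun x => exp (-x) / 2) atBot atTop :=
    (tendsto_exp_atTop.comp tendsto_neg_atBot_atTop).atTop_div_const two_pos
  refine tendsto_atTop_mono (fun x => ?_) hexp
  rw [cosh_eq]
  gcongr
  linarith [exp_pos x]

lemma tendsto_sech_atBot : Tendsto (fun x => 1 / cosh x) atBot (𝓝 0) := by
  exact tendsto_cosh_atBot.inv_tendsto_atTop.congr fun x => (one_div (cosh x)).symm

-- `tanh x + 1 = (sinh x + cosh x) / cosh x = e^x sech x`.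
lemma tendsto_tanh_atBot : Tendsto tanh atBot (𝓝 (-1)) := by
  have hsum : Tendsto (fun x => exp x * (1 / cosh x) - 1) atBot (𝓝 (0 * 0 - 1)) :=
    (tendsto_exp_atBot.mul tendsto_sech_atBot).sub_const 1
  refine (hsum.congr fun x => ?_).trans (by norm_num)
  have hc : cosh x ≠ 0 := (cosh_pos x).ne'
  rw [tanh_eq_sinh_div_cosh, ← cosh_add_sinh]
  field_simp
  ring

end Real

lemma HasDerivAt.const_mul_exp_neg_mul {g : ℝ → ℝ} {g' x : ℝ} (a s : ℝ)
    (hg : HasDerivAt g g' x) :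
    HasDerivAt (fun y => a * Real.exp (-s * y) * g y)
      (a * Real.exp (-s * x) * (g' - s * g x)) x := by
  have hexp : HasDerivAt (fun y => Real.exp (-s * y)) (Real.exp (-s * x) * -s) x := by
    simpa using ((hasDerivAt_id x).const_mul (-s)).exp
  refine ((hexp.const_mul a).mul hg).congr_deriv ?_
  ring

lemma exists_lt_abs_of_tendsto_exp_mul {f : ℝ → ℝ} {s L : ℝ} (hs : 0 < s) (hL : L ≠ 0)
    (hf : Tendsto (fun x => exp (s * x) * f x) atBot (𝓝 L)) (C : ℝ) : ∃ x, C < |f x| := by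
  by_contra! hbdd
  have hexp : Tendsto (fun x => exp (s * x)) atBot (𝓝 0) :=
    tendsto_exp_atBot.comp (tendsto_id.const_mul_atBot hs)
  have hzero : Tendsto (fun x => exp (s * x) * f x) atBot (𝓝 0) :=
    hexp.zero_mul_isBoundedUnder_le (isBoundedUnder_of ⟨C, hbdd⟩)
  exact hL (tendsto_nhds_unique hf hzero)

section SecondSolution

variable (a s : ℝ)

/-- The components of `u₂ = a e^{-s x} [−sech² x, (tanh x + s)²]ᵀ`; the paper's case is
`a = (1 + √2)⁻²`, `s = √2`. -/
noncomputable def u₂₁ (x : ℝ) : ℝ := a * exp (-s * x) * (-(1 / cosh x) ^ 2)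

noncomputable def u₂₂ (x : ℝ) : ℝ := a * exp (-s * x) * (tanh x + s) ^ 2

lemma deriv_u₂₁ :
    deriv (u₂₁ a s) = fun x => a * exp (-s * x) * ((1 / cosh x) ^ 2 * (s + 2 * tanh x)) := by
  funext x
  refine ((((hasDerivAt_sech x).pow 2).neg.const_mul_exp_neg_mul a s).congr_deriv ?_).deriv
  simp only [Pi.pow_apply, Pi.neg_apply]
  ring

lemma deriv_deriv_u₂₁ (x : ℝ) : deriv (deriv (u₂₁ a s)) x =
    a * exp (-s * x) * ((1 / cosh x) ^ 2 * (2 * (1 / cosh x) ^ 2 - (s + 2 * tanh x) ^ 2)) := by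
  rw [deriv_u₂₁]
  have hpoly := ((hasDerivAt_sech x).pow 2).mul (((hasDerivAt_tanh x).const_mul 2).const_add s)
  refine ((hpoly.const_mul_exp_neg_mul a s).congr_deriv ?_).deriv
  simp only [Pi.mul_apply, Pi.pow_apply]
  ring

lemma deriv_u₂₂ :
    deriv (u₂₂ a s) = fun x =>
      a * exp (-s * x) * ((tanh x + s) * (2 * (1 / cosh x) ^ 2 - s * (tanh x + s))) := by
  funext x
  have hpoly := ((hasDerivAt_tanh x).add_const s).pow 2
  refine ((hpoly.const_mul_exp_neg_mul a s).congr_deriv ?_).deriv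
  simp only [Pi.pow_apply]
  ring

lemma deriv_deriv_u₂₂ (x : ℝ) : deriv (deriv (u₂₂ a s)) x =
    a * exp (-s * x) * (s ^ 2 * (tanh x + s) ^ 2 - 4 * (tanh x + s) ^ 2 * (1 / cosh x) ^ 2
      + 2 * (1 / cosh x) ^ 4) := by
  rw [deriv_u₂₂]
  have ht := (hasDerivAt_tanh x).add_const s
  have hpoly := ht.mul ((((hasDerivAt_sech x).pow 2).const_mul 2).sub (ht.const_mul s))
  refine ((hpoly.const_mul_exp_neg_mul a s).congr_deriv ?_).deriv
  simp only [Pi.mul_apply, Pi.pow_apply, Pi.sub_apply]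
  ring

variable {s}

lemma u₂_eqn_fst (hs : s ^ 2 = 2) (x : ℝ) :
    -(deriv (deriv (u₂₁ a s)) x) + u₂₁ a s x - 4 * (1 / cosh x) ^ 2 * u₂₁ a s x
      - 2 * (1 / cosh x) ^ 2 * u₂₂ a s x = u₂₁ a s x := by
  rw [deriv_deriv_u₂₁, u₂₁, u₂₂]
  linear_combination (2 * a * exp (-s * x) * (1 / cosh x) ^ 2) * sech_sq_add_tanh_sq x
    - (a * exp (-s * x) * (1 / cosh x) ^ 2) * hs

lemma u₂_eqn_snd (hs : s ^ 2 = 2) (x : ℝ) :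
    deriv (deriv (u₂₂ a s)) x - u₂₂ a s x + 2 * (1 / cosh x) ^ 2 * u₂₁ a s x
      + 4 * (1 / cosh x) ^ 2 * u₂₂ a s x = u₂₂ a s x := by
  rw [deriv_deriv_u₂₂, u₂₁, u₂₂]
  linear_combination (a * exp (-s * x) * (tanh x + s) ^ 2) * hs

variable (s)

lemma exp_mul_u₂₁ (x : ℝ) : exp (s * x) * u₂₁ a s x = a * (-(1 / cosh x) ^ 2) := by
  rw [u₂₁, neg_mul, exp_neg]
  field_simp

lemma exp_mul_u₂₂ (x : ℝ) : exp (s * x) * u₂₂ a s x = a * (tanh x + s) ^ 2 := by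
  rw [u₂₂, neg_mul, exp_neg]
  field_simp

lemma tendsto_exp_mul_u₂₁ : Tendsto (fun x => exp (s * x) * u₂₁ a s x) atBot (𝓝 0) := by
  simp_rw [exp_mul_u₂₁]
  simpa using ((tendsto_sech_atBot.pow 2).neg).const_mul a

lemma tendsto_exp_mul_u₂₂ :
    Tendsto (fun x => exp (s * x) * u₂₂ a s x) atBot (𝓝 (a * (s - 1) ^ 2)) := by
  simp_rw [exp_mul_u₂₂]
  simpa [neg_add_eq_sub] using (((tendsto_tanh_atBot.add_const s).pow 2).const_mul a)

end SecondSolution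

/-- The second solution `u₂ = (1+√2)⁻² e^{−√2 x} [−sech²x, (tanh x + √2)²]ᵀ`
satisfies `H₀u₂ = u₂`, `e^{√2 x}u₂` has the stated limits as `x → −∞`, and
`u₂` is unbounded on `ℝ`. -/
theorem stmt8 :
    let sech : ℝ → ℝ := fun y => 1 / Real.cosh y
    let f1 : ℝ → ℝ := fun x =>
      (1 + Real.sqrt 2)⁻¹ ^ 2 * Real.exp (-(Real.sqrt 2) * x) * (-(sech x)^2)
    let f2 : ℝ → ℝ := fun x =>
      (1 + Real.sqrt 2)⁻¹ ^ 2 * Real.exp (-(Real.sqrt 2) * x) * (Real.tanh x + Real.sqrt 2)^2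
    (∀ x, -(deriv (deriv f1) x) + f1 x - 4 * (sech x)^2 * f1 x - 2 * (sech x)^2 * f2 x = f1 x) ∧
    (∀ x, deriv (deriv f2) x - f2 x + 2 * (sech x)^2 * f1 x + 4 * (sech x)^2 * f2 x = f2 x) ∧
    Tendsto (fun x => Real.exp (Real.sqrt 2 * x) * f1 x) atBot (nhds 0) ∧
    Tendsto (fun x => Real.exp (Real.sqrt 2 * x) * f2 x) atBot
      (nhds ((1 + Real.sqrt 2)⁻¹ ^ 2 * (Real.sqrt 2 - 1)^2)) ∧
    (∀ C : ℝ, ∃ x : ℝ, C < |f2 x|) := by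
  intro sech f1 f2
  have hs : √2 ^ 2 = 2 := sq_sqrt zero_le_two
  have hL : (1 + √2)⁻¹ ^ 2 * (√2 - 1) ^ 2 ≠ 0 := by
    have : (0 : ℝ) < √2 - 1 := sub_pos.2 one_lt_sqrt_two
    positivity
  exact ⟨u₂_eqn_fst _ hs, u₂_eqn_snd _ hs, tendsto_exp_mul_u₂₁ _ _, tendsto_exp_mul_u₂₂ _ _,
    exists_lt_abs_of_tendsto_exp_mul (sqrt_pos.2 two_pos) hL (tendsto_exp_mul_u₂₂ _ _)⟩
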